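/- arXiv:2111.12811 — 11 statements merged into one kernel-verified Lean document; each statement's English description precedes it below -/
import Mathlib

section
/- The lower probability of a Vertical Barrier Model is 2-monotone: for all events A, B, P̲(A ∪ B) + P̲(A ∩ B) ≥ P̲(A) + P̲(B). -/
lemma vbm_key (a b : ℝ) (hb : 0 < b) (u v s t : ℝ)
    (hsu : u ≤ s) (hsv : v ≤ s) (hst : s + t = u + v) :
    max (b * u + a) 0 + max (b * v + a) 0 ≤ max (b * s + a) 0 + max (b * t + a) 0 := by
  rcases le_total (b * u + a) 0 with hu | hu <;>
  rcases le_total (b * v + a) 0 with hv | hv <;>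
  rcases le_total (b * s + a) 0 with hs | hs <;>
  rcases le_total (b * t + a) 0 with ht | ht <;>
  simp [max_eq_left, max_eq_right, *] <;>
  nlinarith [mul_le_mul_of_nonneg_left hsu hb.le, mul_le_mul_of_nonneg_left hsv hb.le]

/-- The lower probability of a Vertical Barrier Model is 2-monotone:
`Plow (A ∪ B) + Plow (A ∩ B) ≥ Plow A + Plow B`. -/
theorem stmt3 {Ω : Type*} (P0 : Set Ω → ℝ)
    (hP0u : P0 Set.univ = 1) (hP0e : P0 ∅ = 0) (hP0nn : ∀ E, 0 ≤ P0 E)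
    (hP0add : ∀ E F : Set Ω, Disjoint E F → P0 (E ∪ F) = P0 E + P0 F)
    (a b : ℝ) (hb : 0 < b) (ha : a ≤ 0) (hab0 : 0 ≤ a + b) (hab1 : a + b ≤ 1)
    (Plow : Set Ω → ℝ)
    (hPlow : ∀ A : Set Ω, A ≠ Set.univ → Plow A = max (b * P0 A + a) 0)
    (hPlowU : Plow Set.univ = 1) :
    ∀ A B : Set Ω, Plow A + Plow B ≤ Plow (A ∪ B) + Plow (A ∩ B) := by
  -- monotonicity of P0
  have hmono : ∀ E F : Set Ω, E ⊆ F → P0 E ≤ P0 F := by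
    intro E F hEF
    have hdisj : Disjoint E (F \ E) := Set.disjoint_sdiff_right
    have : P0 (E ∪ (F \ E)) = P0 E + P0 (F \ E) := hP0add _ _ hdisj
    rw [Set.union_diff_cancel hEF] at this
    have := hP0nn (F \ E)
    linarith
  -- modularity
  have hmod : ∀ A B : Set Ω, P0 (A ∪ B) + P0 (A ∩ B) = P0 A + P0 B := by
    intro A B
    have h1 : P0 (A ∪ B) = P0 A + P0 (B \ A) := by
      rw [← hP0add A (B \ A) Set.disjoint_sdiff_right, Set.union_diff_self]
    have h2 : P0 B = P0 (A ∩ B) + P0 (B \ A) := by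
      rw [← hP0add _ _ (Set.disjoint_sdiff_right.mono_left Set.inter_subset_left)]
      congr 1
      ext x; simp [Set.mem_diff]; tauto
    linarith
  intro A B
  by_cases hA : A = Set.univ
  · subst hA
    simp [hPlowU, Set.univ_union, Set.univ_inter]
  by_cases hB : B = Set.univ
  · subst hB
    simp [hPlowU, Set.union_univ, Set.inter_univ]
    linarith
  have hI : A ∩ B ≠ Set.univ := by
    intro h
    exact hA (Set.eq_univ_of_subset Set.inter_subset_left h ▸ rfl)
  have hle1 : ∀ E : Set Ω, P0 E ≤ 1 := fun E => hP0u ▸ hmono E Set.univ (Set.subset_univ E)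
  rw [hPlow A hA, hPlow B hB, hPlow _ hI]
  by_cases hU : A ∪ B = Set.univ
  · rw [hU, hPlowU]
    have hst : (1 : ℝ) + P0 (A ∩ B) = P0 A + P0 B := by
      have := hmod A B; rw [hU, hP0u] at this; linarith
    have key := vbm_key a b hb (P0 A) (P0 B) 1 (P0 (A ∩ B)) (hle1 A) (hle1 B) hst
    have : max (b * 1 + a) 0 ≤ 1 := by
      rcases le_total (b * 1 + a) 0 with h | h
      · rw [max_eq_right h]; norm_num
      · rw [max_eq_left h]; linarith
    linarith
  · rw [hPlow _ hU]
    exact vbm_key a b hb (P0 A) (P0 B) (P0 (A ∪ B)) (P0 (A ∩ B))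
      (hmono A (A ∪ B) Set.subset_union_left)
      (hmono B (A ∪ B) Set.subset_union_right)
      (hmod A B)
end

section
/- The upper probability of a Vertical Barrier Model is 2-alternating: for all events A, B, P̄(A ∪ B) + P̄(A ∩ B) ≤ P̄(A) + P̄(B). -/
private lemma min_key (p q x y : ℝ) (h : p + q = x + y) (hqx : q ≤ x) (hqy : q ≤ y) :
    min p 1 + min q 1 ≤ min x 1 + min y 1 := by
  rcases le_total p 1 with hp | hp <;> rcases le_total q 1 with hq | hq <;>
  rcases le_total x 1 with hx | hx <;> rcases le_total y 1 with hy | hy <;>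
  simp [min_eq_left, min_eq_right, *] <;> linarith

/-- The upper probability of a Vertical Barrier Model is 2-alternating:
`Pup (A ∪ B) + Pup (A ∩ B) ≤ Pup A + Pup B`. -/
theorem stmt4 {Ω : Type*} (P0 : Set Ω → ℝ)
    (hP0u : P0 Set.univ = 1) (hP0e : P0 ∅ = 0) (hP0nn : ∀ E, 0 ≤ P0 E)
    (hP0add : ∀ E F : Set Ω, Disjoint E F → P0 (E ∪ F) = P0 E + P0 F)
    (a b c : ℝ) (hb : 0 < b) (ha : a ≤ 0) (hab0 : 0 ≤ a + b) (hab1 : a + b ≤ 1)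
    (hc : c = 1 - (a + b))
    (Pup : Set Ω → ℝ)
    (hPup : ∀ A : Set Ω, A ≠ ∅ → Pup A = min (b * P0 A + c) 1)
    (hPupE : Pup ∅ = 0) :
    ∀ A B : Set Ω, Pup (A ∪ B) + Pup (A ∩ B) ≤ Pup A + Pup B := by
  have hc0 : 0 ≤ c := by linarith
  have hmono : ∀ E F : Set Ω, E ⊆ F → P0 E ≤ P0 F := by
    intro E F hEF
    have h1 : P0 F = P0 E + P0 (F \ E) := by
      rw [← hP0add E (F \ E) Set.disjoint_sdiff_right, Set.union_diff_cancel hEF]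
    have := hP0nn (F \ E)
    linarith
  intro A B
  rcases eq_or_ne A ∅ with hA | hA
  · subst hA; simp [hPupE]
  rcases eq_or_ne B ∅ with hB | hB
  · subst hB; simp [hPupE]
  have hAB : A ∪ B ≠ ∅ := by
    intro h; exact hA (Set.subset_eq_empty (Set.subset_union_left.trans h.subset) rfl)
  have h1 : P0 (A ∪ B) = P0 A + P0 (B \ A) := by
    rw [← hP0add A (B \ A) Set.disjoint_sdiff_right, Set.union_diff_self]
  have h2 : P0 B = P0 (A ∩ B) + P0 (B \ A) := by
    rw [← hP0add (A ∩ B) (B \ A) (Set.disjoint_sdiff_right.mono_left Set.inter_subset_left)]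
    congr 1
    rw [Set.inter_comm, Set.inter_union_diff]
  rcases eq_or_ne (A ∩ B) ∅ with hI | hI
  · rw [hI, hPupE, hPup _ hAB, hPup _ hA, hPup _ hB]
    have hP0I : P0 (A ∩ B) = 0 := by rw [hI, hP0e]
    have key := min_key (b * P0 (A ∪ B) + c) c (b * P0 A + c) (b * P0 B + c)
      (by nlinarith) (by nlinarith [hP0nn A]) (by nlinarith [hP0nn B])
    have : (0:ℝ) ≤ min c 1 := le_min hc0 zero_le_one
    linarith
  · rw [hPup _ hAB, hPup _ hI, hPup _ hA, hPup _ hB]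
    have hIA : P0 (A ∩ B) ≤ P0 A := hmono _ _ Set.inter_subset_left
    have hIB : P0 (A ∩ B) ≤ P0 B := hmono _ _ Set.inter_subset_right
    exact min_key _ _ _ _ (by nlinarith) (by nlinarith) (by nlinarith)
end

section
/- In a Vertical Barrier Model with parameters (a, b) and P̲(B) > 0, the conditional coefficients a_B = a/(b·P₀(B) + 1 − b), b_B = b·P₀(B)/(b·P₀(B) + 1 − b) satisfy b_B > 0, a_B ≤ 0, and 0 < a_B + b_B ≤ 1; i.e. the conditional model given by these coefficients is again a VBM. -/
/-! The conditional coefficients share the denominator `d = b p + 1 - b`, which dominates the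
numerator `b p + a` of `a_B + b_B` exactly because `a + b ≤ 1`. Hence `d > 0`, and
`a_B + b_B = (b p + a) / d` lies in `(0, 1]`; `b_B > 0` because `b p > -a ≥ 0`. -/

lemma vbm_lowerProb_le_conditionalDenom {a b p : ℝ} (hab1 : a + b ≤ 1) :
    b * p + a ≤ b * p + 1 - b := by
  linarith

lemma vbm_conditionalDenom_pos {a b p : ℝ} (hab1 : a + b ≤ 1) (hpos : 0 < b * p + a) :
    0 < b * p + 1 - b :=
  hpos.trans_le (vbm_lowerProb_le_conditionalDenom hab1)

theorem stmt5_general {Ω : Type*} (P0 : Set Ω → ℝ)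
    (a b : ℝ) (ha : a ≤ 0) (hab1 : a + b ≤ 1)
    (B : Set Ω) (hB : 0 < b * P0 B + a)
    (aB bB : ℝ)
    (haB : aB = a / (b * P0 B + 1 - b))
    (hbB : bB = b * P0 B / (b * P0 B + 1 - b)) :
    0 < bB ∧ aB ≤ 0 ∧ 0 < aB + bB ∧ aB + bB ≤ 1 := by
  have hd := vbm_conditionalDenom_pos hab1 hB
  have hsum : aB + bB = (b * P0 B + a) / (b * P0 B + 1 - b) := by
    rw [haB, hbB, ← add_div, add_comm a]
  refine ⟨?_, haB ▸ div_nonpos_of_nonpos_of_nonneg ha hd.le, hsum ▸ div_pos hB hd, ?_⟩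
  · rw [hbB]
    exact div_pos (by linarith) hd
  · rw [hsum, div_le_one hd]
    exact vbm_lowerProb_le_conditionalDenom hab1

/-- In a VBM with `Plow B > 0` (i.e. `b * P0 B + a > 0`), the conditional
coefficients `a_B = a / (b * P0 B + 1 - b)` and `b_B = b * P0 B / (b * P0 B + 1 - b)`
satisfy `b_B > 0`, `a_B ≤ 0` and `0 < a_B + b_B ≤ 1`: the conditional model is again a VBM. -/
theorem stmt5 {Ω : Type*} (P0 : Set Ω → ℝ)
    (hP0u : P0 Set.univ = 1) (hP0e : P0 ∅ = 0) (hP0nn : ∀ E, 0 ≤ P0 E)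
    (hP0le1 : ∀ E, P0 E ≤ 1)
    (hP0add : ∀ E F : Set Ω, Disjoint E F → P0 (E ∪ F) = P0 E + P0 F)
    (a b : ℝ) (hb : 0 < b) (ha : a ≤ 0) (hab0 : 0 ≤ a + b) (hab1 : a + b ≤ 1)
    (B : Set Ω) (hB : 0 < b * P0 B + a)
    (aB bB : ℝ)
    (haB : aB = a / (b * P0 B + 1 - b))
    (hbB : bB = b * P0 B / (b * P0 B + 1 - b)) :
    0 < bB ∧ aB ≤ 0 ∧ 0 < aB + bB ∧ aB + bB ≤ 1 :=
  stmt5_general P0 a b ha hab1 B hB aB bB haB hbB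
end

section
/- In a coherent Nearly-Linear model with P̲(B) > 0, P̲(A∩B) > 0 and P̄(Aᶜ∩B) > 0, the natural extension satisfies P̲(A|B) ≤ P̲(A) if and only if P₀(A ∩ Bᶜ) ≥ P₀(Bᶜ)·P̲(A). -/
/-- In a coherent Nearly-Linear model with `Plow B > 0`, `Plow (A∩B) > 0`
and `Pup (Aᶜ∩B) > 0`, the natural extension
`Plow(A|B) = (b·P0(A∩B)+a)/(b·P0 B + 1 − b)` satisfies `Plow(A|B) ≤ Plow A` iff
`P0 (A ∩ Bᶜ) ≥ P0 Bᶜ · Plow A`. -/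
theorem stmt7 {Ω : Type*} (P0 : Set Ω → ℝ)
    (hP0u : P0 Set.univ = 1) (hP0e : P0 ∅ = 0) (hP0nn : ∀ E, 0 ≤ P0 E)
    (hP0add : ∀ E F : Set Ω, Disjoint E F → P0 (E ∪ F) = P0 E + P0 F)
    (a b c : ℝ) (hb : 0 < b) (hc : c = 1 - (a + b))
    (Plow Pup : Set Ω → ℝ)
    (hPlow : ∀ A : Set Ω, A ≠ ∅ → A ≠ Set.univ →
      Plow A = min (max (b * P0 A + a) 0) 1)
    (hPlowE : Plow ∅ = 0) (hPlowU : Plow Set.univ = 1)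
    (hPup : ∀ A : Set Ω, A ≠ ∅ → A ≠ Set.univ →
      Pup A = max (min (b * P0 A + c) 1) 0)
    (hPupE : Pup ∅ = 0) (hPupU : Pup Set.univ = 1)
    -- coherence (the model is 2-monotone)
    (hcoh : ∀ E F : Set Ω, Plow E + Plow F ≤ Plow (E ∪ F) + Plow (E ∩ F))
    (A B : Set Ω) (hB : 0 < Plow B) (hABl : 0 < Plow (A ∩ B))
    (hABu : 0 < Pup (Aᶜ ∩ B)) :
    (b * P0 (A ∩ B) + a) / (b * P0 B + 1 - b) ≤ Plow A ↔
      P0 Bᶜ * Plow A ≤ P0 (A ∩ Bᶜ) := by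
  -- nontriviality facts
  have hABne : A ∩ B ≠ ∅ := by
    intro h; rw [h, hPlowE] at hABl; exact lt_irrefl 0 hABl
  have hAcBne : Aᶜ ∩ B ≠ ∅ := by
    intro h; rw [h, hPupE] at hABu; exact lt_irrefl 0 hABu
  have hABnu : A ∩ B ≠ Set.univ := by
    intro h
    have hA : A = Set.univ := Set.eq_univ_of_univ_subset (h ▸ Set.inter_subset_left)
    apply hAcBne
    rw [hA]; simp
  have hAcBnu : Aᶜ ∩ B ≠ Set.univ := by
    intro h
    have hA : Aᶜ = Set.univ := Set.eq_univ_of_univ_subset (h ▸ Set.inter_subset_left)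
    apply hABne
    rw [show A = ∅ from by simpa using congrArg compl hA]; simp
  have hAne : A ≠ ∅ := by
    intro h; exact hABne (by rw [h]; simp)
  have hAnu : A ≠ Set.univ := by
    intro h; apply hAcBne; rw [h]; simp
  -- additivity decompositions
  set p := P0 (A ∩ B) with hp
  set q := P0 (A ∩ Bᶜ) with hq
  set r := P0 (Aᶜ ∩ B) with hr
  set s := P0 (Aᶜ ∩ Bᶜ) with hs
  have hdisj1 : Disjoint (A ∩ B) (Aᶜ ∩ B) :=
    (disjoint_compl_right : Disjoint A Aᶜ).mono Set.inter_subset_left Set.inter_subset_left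
  have hdisj2 : Disjoint (A ∩ Bᶜ) (Aᶜ ∩ Bᶜ) :=
    (disjoint_compl_right : Disjoint A Aᶜ).mono Set.inter_subset_left Set.inter_subset_left
  have hB1 : P0 B = p + r := by
    have : (A ∩ B) ∪ (Aᶜ ∩ B) = B := by
      rw [← Set.union_inter_distrib_right, Set.union_compl_self, Set.univ_inter]
    rw [← this, hP0add _ _ hdisj1]
  have hBc1 : P0 Bᶜ = q + s := by
    have : (A ∩ Bᶜ) ∪ (Aᶜ ∩ Bᶜ) = Bᶜ := by
      rw [← Set.union_inter_distrib_right, Set.union_compl_self, Set.univ_inter]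
    rw [← this, hP0add _ _ hdisj2]
  have hA1 : P0 A = p + q := by
    have : (A ∩ B) ∪ (A ∩ Bᶜ) = A := by
      rw [← Set.inter_union_distrib_left, Set.union_compl_self, Set.inter_univ]
    rw [← this, hP0add _ _ ((disjoint_compl_right : Disjoint B Bᶜ).mono
      Set.inter_subset_right Set.inter_subset_right)]
  have hsum : p + q + r + s = 1 := by
    have hd : Disjoint B Bᶜ := disjoint_compl_right
    have : P0 Set.univ = P0 B + P0 Bᶜ := by
      rw [← Set.union_compl_self B, hP0add _ _ hd]
    rw [hP0u, hB1, hBc1] at this; linarith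
  -- positivity of x and y
  have hx : 0 < b * p + a := by
    have := hPlow (A ∩ B) hABne hABnu
    rw [this] at hABl
    rcases lt_min_iff.mp hABl with ⟨h1, _⟩
    rcases lt_max_iff.mp h1 with h | h
    · exact h
    · exact absurd h (lt_irrefl 0)
  have hy : 0 < b * r + c := by
    rw [hPup (Aᶜ ∩ B) hAcBne hAcBnu] at hABu
    have h1 : 0 < min (b * r + c) 1 := by
      rcases lt_max_iff.mp hABu with h | h
      · exact h
      · exact absurd h (lt_irrefl 0)
    exact (lt_min_iff.mp h1).1
  -- P0 values are nonneg
  have hpnn : 0 ≤ p := hP0nn _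
  have hqnn : 0 ≤ q := hP0nn _
  have hrnn : 0 ≤ r := hP0nn _
  have hsnn : 0 ≤ s := hP0nn _
  -- denominator positive
  have hD : 0 < b * (p + r) + 1 - b := by
    nlinarith [hx, hy]
  -- the value of Plow A is unclipped
  have hup : b * P0 A + a ≤ 1 := by
    by_contra hcon
    push_neg at hcon
    rw [hA1] at hcon
    nlinarith [hy]
  have hlo : 0 < b * P0 A + a := by
    rw [hA1]; nlinarith [hx, mul_nonneg hb.le hqnn]
  have hL : Plow A = b * P0 A + a := by
    rw [hPlow A hAne hAnu, max_eq_left hlo.le, min_eq_left hup]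
  rw [hL, hA1, hB1, hBc1, div_le_iff₀ hD]
  have hid : (b * (p + q) + a) * (b * (p + r) + 1 - b) - (b * p + a)
      = b * (q - (b * (p + q) + a) * (q + s)) := by
    linear_combination (b * (p + q) + a) * b * hsum
  constructor
  · intro h
    have h2 : 0 ≤ b * (q - (b * (p + q) + a) * (q + s)) := by linarith [hid]
    have h3 : 0 ≤ q - (b * (p + q) + a) * (q + s) :=
      nonneg_of_mul_nonneg_right (by linarith) hb
    linarith [mul_comm (q + s) (b * (p + q) + a)]
  · intro h
    have h3 : 0 ≤ q - (b * (p + q) + a) * (q + s) := by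
      linarith [mul_comm (q + s) (b * (p + q) + a)]
    linarith [mul_nonneg hb.le h3, hid]
end

section
/- In a coherent Nearly-Linear model with P̲(B) > 0, P̲(Aᶜ∩B) > 0 and P̄(A∩B) > 0, the natural extension satisfies P̄(A|B) ≥ P̄(A) if and only if P₀(A ∩ Bᶜ) ≤ P₀(Bᶜ)·P̄(A). -/
/-- In a coherent Nearly-Linear model with `Plow B > 0`, `Plow (Aᶜ∩B) > 0`
and `Pup (A∩B) > 0`, the natural extension
`Pup(A|B) = (b·P0(A∩B)+c)/(b·P0 B + 1 − b)` satisfies `Pup(A|B) ≥ Pup A` iff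
`P0 (A ∩ Bᶜ) ≤ P0 Bᶜ · Pup A`. -/
theorem stmt8 {Ω : Type*} (P0 : Set Ω → ℝ)
    (hP0u : P0 Set.univ = 1) (hP0e : P0 ∅ = 0) (hP0nn : ∀ E, 0 ≤ P0 E)
    (hP0add : ∀ E F : Set Ω, Disjoint E F → P0 (E ∪ F) = P0 E + P0 F)
    (a b c : ℝ) (hb : 0 < b) (hc : c = 1 - (a + b))
    (Plow Pup : Set Ω → ℝ)
    (hPlow : ∀ A : Set Ω, A ≠ ∅ → A ≠ Set.univ →
      Plow A = min (max (b * P0 A + a) 0) 1)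
    (hPlowE : Plow ∅ = 0) (hPlowU : Plow Set.univ = 1)
    (hPup : ∀ A : Set Ω, A ≠ ∅ → A ≠ Set.univ →
      Pup A = max (min (b * P0 A + c) 1) 0)
    (hPupE : Pup ∅ = 0) (hPupU : Pup Set.univ = 1)
    -- coherence (the model is 2-monotone)
    (hcoh : ∀ E F : Set Ω, Plow E + Plow F ≤ Plow (E ∪ F) + Plow (E ∩ F))
    (A B : Set Ω) (hB : 0 < Plow B) (hABl : 0 < Plow (Aᶜ ∩ B))
    (hABu : 0 < Pup (A ∩ B)) :
    Pup A ≤ (b * P0 (A ∩ B) + c) / (b * P0 B + 1 - b) ↔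
      P0 (A ∩ Bᶜ) ≤ P0 Bᶜ * Pup A := by
  -- nontriviality of the relevant sets
  have hABne : A ∩ B ≠ ∅ := by
    intro h; rw [h, hPupE] at hABu; exact lt_irrefl 0 hABu
  have hAcBne : Aᶜ ∩ B ≠ ∅ := by
    intro h; rw [h, hPlowE] at hABl; exact lt_irrefl 0 hABl
  have hAne : A ≠ ∅ := by
    intro h; exact hABne (by rw [h]; simp)
  have hAnu : A ≠ Set.univ := by
    intro h; exact hAcBne (by rw [h]; simp)
  have hABnu : A ∩ B ≠ Set.univ := by
    intro h
    exact hAnu (Set.eq_univ_of_univ_subset (h ▸ Set.inter_subset_left))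
  have hAcBnu : Aᶜ ∩ B ≠ Set.univ := by
    intro h
    have : Aᶜ = Set.univ := Set.eq_univ_of_univ_subset (h ▸ Set.inter_subset_left)
    exact hAne (by simpa [Set.compl_univ] using congrArg compl this)
  -- additivity facts
  have hsumB : P0 (A ∩ B) + P0 (Aᶜ ∩ B) = P0 B := by
    have hd : Disjoint (A ∩ B) (Aᶜ ∩ B) := by
      rw [Set.disjoint_left]; intro x hx hx'; exact hx'.1 hx.1
    have hu : (A ∩ B) ∪ (Aᶜ ∩ B) = B := by
      ext x; simp only [Set.mem_union, Set.mem_inter_iff, Set.mem_compl_iff]; tauto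
    rw [← hP0add _ _ hd, hu]
  have hsumA : P0 (A ∩ B) + P0 (A ∩ Bᶜ) = P0 A := by
    have hd : Disjoint (A ∩ B) (A ∩ Bᶜ) := by
      rw [Set.disjoint_left]; intro x hx hx'; exact hx'.2 hx.2
    have hu : (A ∩ B) ∪ (A ∩ Bᶜ) = A := by
      ext x; simp only [Set.mem_union, Set.mem_inter_iff, Set.mem_compl_iff]; tauto
    rw [← hP0add _ _ hd, hu]
  have hsumBc : P0 (A ∩ Bᶜ) + P0 (Aᶜ ∩ Bᶜ) = P0 Bᶜ := by
    have hd : Disjoint (A ∩ Bᶜ) (Aᶜ ∩ Bᶜ) := by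
      rw [Set.disjoint_left]; intro x hx hx'; exact hx'.1 hx.1
    have hu : (A ∩ Bᶜ) ∪ (Aᶜ ∩ Bᶜ) = Bᶜ := by
      ext x; simp only [Set.mem_union, Set.mem_inter_iff, Set.mem_compl_iff]; tauto
    rw [← hP0add _ _ hd, hu]
  have htot : P0 B + P0 Bᶜ = 1 := by
    have hd : Disjoint B Bᶜ := disjoint_compl_right
    have hu : B ∪ Bᶜ = Set.univ := Set.union_compl_self B
    rw [← hP0add _ _ hd, hu, hP0u]
  -- positivity facts
  have hzp : 0 < b * P0 (Aᶜ ∩ B) + a := by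
    rw [hPlow _ hAcBne hAcBnu] at hABl
    have h1 := (lt_min_iff.mp hABl).1
    rcases lt_max_iff.mp h1 with h | h
    · exact h
    · exact absurd h (lt_irrefl 0)
  have hxp : 0 < b * P0 (A ∩ B) + c := by
    rw [hPup _ hABne hABnu] at hABu
    rcases lt_max_iff.mp hABu with h | h
    · exact (lt_min_iff.mp h).1
    · exact absurd h (lt_irrefl 0)
  have hD : 0 < b * P0 B + 1 - b := by nlinarith [hsumB, hc]
  -- Pup A is non-extreme
  have hw : 0 ≤ P0 (Aᶜ ∩ Bᶜ) := hP0nn _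
  have hy : 0 ≤ P0 (A ∩ Bᶜ) := hP0nn _
  have hv0 : 0 < b * P0 A + c := by nlinarith [hsumA]
  have hv1 : b * P0 A + c < 1 := by nlinarith [hsumA, hsumB, hsumBc, htot]
  have hPupA : Pup A = b * P0 A + c := by
    rw [hPup A hAne hAnu, min_eq_left hv1.le, max_eq_left]
    exact hv0.le
  rw [hPupA, le_div_iff₀ hD]
  have key : (b * P0 A + c) * (b * P0 B + 1 - b) - (b * P0 (A ∩ B) + c)
      = b * (P0 (A ∩ Bᶜ) - P0 Bᶜ * (b * P0 A + c)) := by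
    linear_combination (b * (b * P0 A + c)) * htot - b * hsumA
  constructor
  · intro h
    nlinarith [key, hb]
  · intro h
    nlinarith [key, hb]
end

section
/- For an ε-contamination model with 0 < ε < 1, assume P₀(A∩B) > 0 and P₀(Aᶜ∩B) > 0. Then the dilation conditions (1−ε)P₀(A)P₀(Bᶜ) ≤ P₀(A∩Bᶜ) ≤ (1−ε)P₀(A)P₀(Bᶜ) + ε·P₀(Bᶜ) are equivalent to −ε·P₀(Aᶜ)·P₀(Bᶜ) ≤ P₀(A∩B) − P₀(A)·P₀(B) ≤ ε·P₀(A)·P₀(Bᶜ). -/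
/-- For an ε-contamination model with `0 < ε < 1`, if `P0 (A∩B) > 0` and
`P0 (Aᶜ∩B) > 0`, then the dilation conditions
`(1−ε)·P0 A·P0 Bᶜ ≤ P0 (A∩Bᶜ) ≤ (1−ε)·P0 A·P0 Bᶜ + ε·P0 Bᶜ` are equivalent to
`−ε·P0 Aᶜ·P0 Bᶜ ≤ P0 (A∩B) − P0 A·P0 B ≤ ε·P0 A·P0 Bᶜ`. -/
theorem stmt9 {Ω : Type*} (P0 : Set Ω → ℝ)
    (hP0u : P0 Set.univ = 1) (hP0e : P0 ∅ = 0) (hP0nn : ∀ E, 0 ≤ P0 E)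
    (hP0add : ∀ E F : Set Ω, Disjoint E F → P0 (E ∪ F) = P0 E + P0 F)
    (ε : ℝ) (hε0 : 0 < ε) (hε1 : ε < 1)
    (A B : Set Ω) (hAB : 0 < P0 (A ∩ B)) (hAcB : 0 < P0 (Aᶜ ∩ B)) :
    ((1 - ε) * P0 A * P0 Bᶜ ≤ P0 (A ∩ Bᶜ) ∧
      P0 (A ∩ Bᶜ) ≤ (1 - ε) * P0 A * P0 Bᶜ + ε * P0 Bᶜ) ↔
    (-(ε * P0 Aᶜ * P0 Bᶜ) ≤ P0 (A ∩ B) - P0 A * P0 B ∧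
      P0 (A ∩ B) - P0 A * P0 B ≤ ε * P0 A * P0 Bᶜ) := by
  have hsplit : ∀ E : Set Ω, P0 E = P0 (E ∩ B) + P0 (E ∩ Bᶜ) := by
    intro E
    rw [← hP0add _ _ (Set.disjoint_of_subset (Set.inter_subset_right)
      (Set.inter_subset_right) disjoint_compl_right)]
    congr 1
    rw [← Set.inter_union_distrib_left, Set.union_compl_self, Set.inter_univ]
  have hA := hsplit A
  have hAc := hsplit Aᶜ
  have hAA : P0 Aᶜ = 1 - P0 A := by
    have := hP0add A Aᶜ disjoint_compl_right
    rw [Set.union_compl_self, hP0u] at this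
    linarith
  have hB : P0 B = P0 (A ∩ B) + P0 (Aᶜ ∩ B) := by
    rw [← hP0add _ _ (Set.disjoint_of_subset (Set.inter_subset_left)
      (Set.inter_subset_left) disjoint_compl_right)]
    congr 1
    rw [← Set.union_inter_distrib_right, Set.union_compl_self, Set.univ_inter]
  have hBB : P0 Bᶜ = 1 - P0 B := by
    have := hP0add B Bᶜ disjoint_compl_right
    rw [Set.union_compl_self, hP0u] at this
    linarith
  set a := P0 (A ∩ B) with ha
  set b := P0 (A ∩ Bᶜ) with hb
  set c := P0 (Aᶜ ∩ B) with hc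
  set d := P0 (Aᶜ ∩ Bᶜ) with hd
  have hBc : P0 Bᶜ = b + d := by rw [hBB, hB]; linarith [hA, hAc, hAA]
  have hsum : a + b + c + d = 1 := by
    have := hAA; rw [hA, hAc] at this; linarith
  rw [hA, hB, hAc, hBc]
  have e2 : b - (1 - ε) * ((a + b) * (b + d)) =
      ((a + b) * (a + c) - a) + ε * ((a + b) * (b + d)) := by
    linear_combination (-(a + b)) * hsum
  have e1 : b - ((1 - ε) * ((a + b) * (b + d)) + ε * (b + d)) =
      ((a + b) * (a + c) - a) - ε * ((c + d) * (b + d)) := by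
    linear_combination (ε * (b + d) - (a + b)) * hsum
  constructor <;> rintro ⟨h1, h2⟩ <;> constructor <;> nlinarith [e1, e2, h1, h2]
end

section
/- In a VBM with P̲(B) > 0, P̲(A∩B) > 0, P̄(Aᶜ∩B) > 0 and P̲(A) < 1, one has P̲(A|B) ≤ P̲(A) if and only if L(A, Bᶜ) ≥ 0, where L(A,Bᶜ) = P₀(A∩Bᶜ) − b·P₀(A)·P₀(Bᶜ) − a·P₀(Bᶜ). -/
/-- In a VBM with `Plow B > 0`, `Plow (A∩B) > 0`, `Pup (Aᶜ∩B) > 0` and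
`Plow A < 1`, one has `Plow(A|B) = (b·P0(A∩B)+a)/(b·P0 B+1−b) ≤ Plow A` iff
`L(A,Bᶜ) = P0(A∩Bᶜ) − b·P0 A·P0 Bᶜ − a·P0 Bᶜ ≥ 0`. -/
theorem stmt12 {Ω : Type*} (P0 : Set Ω → ℝ)
    (hP0u : P0 Set.univ = 1) (hP0e : P0 ∅ = 0) (hP0nn : ∀ E, 0 ≤ P0 E)
    (hP0add : ∀ E F : Set Ω, Disjoint E F → P0 (E ∪ F) = P0 E + P0 F)
    (a b c : ℝ) (hb : 0 < b) (ha : a ≤ 0) (hab0 : 0 ≤ a + b) (hab1 : a + b ≤ 1)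
    (hc : c = 1 - (a + b))
    (Plow Pup : Set Ω → ℝ)
    (hPlow : ∀ E : Set Ω, E ≠ Set.univ → Plow E = max (b * P0 E + a) 0)
    (hPlowU : Plow Set.univ = 1)
    (hPup : ∀ E : Set Ω, Pup E = 1 - Plow Eᶜ)
    (A B : Set Ω) (hB : 0 < Plow B) (hABl : 0 < Plow (A ∩ B))
    (hABu : 0 < Pup (Aᶜ ∩ B)) (hA1 : Plow A < 1) :
    (b * P0 (A ∩ B) + a) / (b * P0 B + 1 - b) ≤ Plow A ↔
      0 ≤ P0 (A ∩ Bᶜ) - b * P0 A * P0 Bᶜ - a * P0 Bᶜ := by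
  -- A ≠ univ
  have hA : A ≠ Set.univ := by
    intro h; rw [h, hPlowU] at hA1; exact lt_irrefl 1 hA1
  have hAB : A ∩ B ≠ Set.univ := by
    intro h
    exact hA (Set.univ_subset_iff.mp (h ▸ Set.inter_subset_left))
  -- positivity of b * P0 (A∩B) + a
  have h1 : 0 < b * P0 (A ∩ B) + a := by
    rw [hPlow _ hAB] at hABl
    rcases lt_max_iff.mp hABl with h | h
    · exact h
    · exact absurd h (lt_irrefl 0)
  -- decompositions
  have hdecA : P0 A = P0 (A ∩ B) + P0 (A ∩ Bᶜ) := by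
    have := hP0add (A ∩ B) (A ∩ Bᶜ)
      (Set.disjoint_of_subset Set.inter_subset_right Set.inter_subset_right
        disjoint_compl_right)
    rwa [Set.inter_union_compl] at this
  have hdecB : P0 B = P0 (A ∩ B) + P0 (Aᶜ ∩ B) := by
    have := hP0add (A ∩ B) (Aᶜ ∩ B)
      (Set.disjoint_of_subset Set.inter_subset_left Set.inter_subset_left
        disjoint_compl_right)
    rwa [← Set.union_inter_distrib_right, Set.union_compl_self, Set.univ_inter] at this
  have hBc : P0 Bᶜ = 1 - P0 B := by
    have := hP0add B Bᶜ disjoint_compl_right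
    rw [Set.union_compl_self, hP0u] at this
    linarith
  have hmono : P0 (A ∩ B) ≤ P0 A := by
    have := hP0nn (A ∩ Bᶜ); linarith
  have hPA : 0 < b * P0 A + a := by nlinarith
  have hPlowA : Plow A = b * P0 A + a := by
    rw [hPlow _ hA]; exact max_eq_left hPA.le
  have hden : 0 < b * P0 B + 1 - b := by
    have := hP0nn (Aᶜ ∩ B)
    nlinarith
  have h2 : P0 (A ∩ Bᶜ) = P0 A - P0 (A ∩ B) := by linarith
  have key : (b * P0 A + a) * (b * P0 B + 1 - b) - (b * P0 (A ∩ B) + a) =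
      b * (P0 (A ∩ Bᶜ) - b * P0 A * P0 Bᶜ - a * P0 Bᶜ) := by
    rw [hBc, h2]; ring
  rw [hPlowA, div_le_iff₀ hden]
  constructor
  · intro h
    by_contra hneg
    push_neg at hneg
    have := mul_neg_of_pos_of_neg hb hneg
    linarith
  · intro h
    have := mul_nonneg hb.le h
    linarith
end

section
/- In a VBM with P̲(B) > 0, the conditional imprecision P̄(A|B) − P̲(A|B) = 1 − (2a + b·P₀(B))/(b·P₀(B) + 1 − b) whenever both conditional values are non-extreme, and the map x ↦ (2a + bx)/(bx + 1 − b) is nondecreasing on the relevant domain (strictly increasing unless b + 2a = 1). -/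
/-- In a VBM with `Plow B > 0`, when both conditional values are
non-extreme (`Plow(A|B) = b_B·P0(A|B)+a_B`, `Pup(A|B) = b_B·P0(A|B)+c_B`), the
conditional imprecision equals `1 − (2a + b·P0 B)/(b·P0 B + 1 − b)`, and the map
`x ↦ (2a + bx)/(bx + 1 − b)` is nondecreasing on the relevant domain, strictly
increasing unless `b + 2a = 1`. -/
theorem stmt14 {Ω : Type*} (P0 : Set Ω → ℝ)
    (hP0u : P0 Set.univ = 1) (hP0e : P0 ∅ = 0) (hP0nn : ∀ E, 0 ≤ P0 E)
    (hP0add : ∀ E F : Set Ω, Disjoint E F → P0 (E ∪ F) = P0 E + P0 F)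
    (a b : ℝ) (hb : 0 < b) (ha : a ≤ 0) (hab0 : 0 ≤ a + b) (hab1 : a + b ≤ 1)
    (B : Set Ω) (hB : 0 < b * P0 B + a)
    (aB bB cB : ℝ)
    (haB : aB = a / (b * P0 B + 1 - b))
    (hbB : bB = b * P0 B / (b * P0 B + 1 - b))
    (hcB : cB = 1 - (aB + bB)) :
    (∀ p : ℝ, (bB * p + cB) - (bB * p + aB) =
        1 - (2 * a + b * P0 B) / (b * P0 B + 1 - b)) ∧
    (∀ x y : ℝ, 0 < b * x + 1 - b → 0 < b * y + 1 - b → x < y →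
      (2 * a + b * x) / (b * x + 1 - b) ≤ (2 * a + b * y) / (b * y + 1 - b) ∧
      (b + 2 * a ≠ 1 →
        (2 * a + b * x) / (b * x + 1 - b) < (2 * a + b * y) / (b * y + 1 - b))) := by
  have hden : 0 < b * P0 B + 1 - b := by linarith
  constructor
  · intro p
    subst haB hbB hcB
    field_simp
    ring
  · intro x y hx hy hxy
    have hnum : 1 - b - 2 * a ≥ 0 := by linarith
    have key : (2 * a + b * y) / (b * y + 1 - b) - (2 * a + b * x) / (b * x + 1 - b)
        = b * (1 - b - 2 * a) * (y - x) / ((b * x + 1 - b) * (b * y + 1 - b)) := by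
      field_simp
      ring
    have hprod : 0 < (b * x + 1 - b) * (b * y + 1 - b) := mul_pos hx hy
    constructor
    · have : 0 ≤ b * (1 - b - 2 * a) * (y - x) / ((b * x + 1 - b) * (b * y + 1 - b)) := by
        apply div_nonneg _ hprod.le
        have : 0 ≤ y - x := by linarith
        positivity
      linarith [key]
    · intro hne
      have hnum' : 0 < 1 - b - 2 * a := lt_of_le_of_ne hnum (fun h : (0:ℝ) = 1 - b - 2 * a => hne (by linarith))
      have : 0 < b * (1 - b - 2 * a) * (y - x) / ((b * x + 1 - b) * (b * y + 1 - b)) := by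
        apply div_pos _ hprod
        have : 0 < y - x := by linarith
        positivity
      linarith [key]
end

section
/- In a VBM with b < 1, if 0 < P₀(B) < 1, P̲(B) > 0, then the imprecision increase Δ(A,B) = (P̄(A|B) − P̲(A|B)) − (P̄(A) − P̲(A)) = 2(a − a_B) + (b − b_B) is strictly positive, where a_B = a/(b·P₀(B)+1−b) and b_B = b·P₀(B)/(b·P₀(B)+1−b), assuming all four probability values are non-extreme so that P̲(A) = b·P₀(A)+a, P̄(A) = b·P₀(A)+c, P̲(A|B) = b_B·P₀(A|B)+a_B, P̄(A|B) = b_B·P₀(A|B)+c_B with c = 1−(a+b), c_B = 1−(a_B+b_B). -/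
/-- In a VBM with `b < 1`, if `0 < P0 B < 1` and `Plow B > 0`, then the
imprecision increase `Δ(A,B) = (Pup(A|B) − Plow(A|B)) − (Pup A − Plow A)
= 2(a − a_B) + (b − b_B)` is strictly positive (all four values non-extreme, so that
the affine formulas for them apply). -/
theorem stmt15 {Ω : Type*} (P0 : Set Ω → ℝ)
    (hP0u : P0 Set.univ = 1) (hP0e : P0 ∅ = 0) (hP0nn : ∀ E, 0 ≤ P0 E)
    (hP0add : ∀ E F : Set Ω, Disjoint E F → P0 (E ∪ F) = P0 E + P0 F)
    (a b c : ℝ) (hb0 : 0 < b) (hb1 : b < 1) (ha : a ≤ 0)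
    (hab0 : 0 ≤ a + b) (hab1 : a + b ≤ 1) (hc : c = 1 - (a + b))
    (A B : Set Ω) (hB0 : 0 < P0 B) (hB1 : P0 B < 1) (hBl : 0 < b * P0 B + a)
    (aB bB cB : ℝ)
    (haB : aB = a / (b * P0 B + 1 - b))
    (hbB : bB = b * P0 B / (b * P0 B + 1 - b))
    (hcB : cB = 1 - (aB + bB))
    (PlowA PupA PlowAB PupAB : ℝ)
    -- all four values are non-extreme, hence given by the affine formulas
    (hPlowA : PlowA = b * P0 A + a) (hPupA : PupA = b * P0 A + c)
    (hPlowAB : PlowAB = bB * (P0 (A ∩ B) / P0 B) + aB)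
    (hPupAB : PupAB = bB * (P0 (A ∩ B) / P0 B) + cB) :
    (PupAB - PlowAB) - (PupA - PlowA) = 2 * (a - aB) + (b - bB) ∧
    0 < (PupAB - PlowAB) - (PupA - PlowA) := by
  have hD : 0 < b * P0 B + 1 - b := by nlinarith
  have hD1 : b * P0 B + 1 - b < 1 := by nlinarith
  have h1 : a - aB ≥ 0 := by
    rw [haB]
    rw [ge_iff_le, sub_nonneg, div_le_iff₀ hD]
    nlinarith
  have h2 : 0 < b - bB := by
    rw [hbB, sub_pos, div_lt_iff₀ hD]
    nlinarith
  constructor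
  · subst hPupAB hPlowAB hPupA hPlowA hcB hc; ring
  · subst hPupAB hPlowAB hPupA hPlowA hcB hc; nlinarith
end

section
/- If a Vertical Barrier Model with parameters (a, b, c = 1−(a+b)) and probability P₀ admits events A, B with Aᶜ ∩ B ≠ ∅, P̄(Aᶜ∩B) = 0, P̲(B) = 0 and P̄(B) > 0, then c = 0, P₀(B) > 0, a < 0 and b > 1; i.e. the model is a Pari-Mutuel Model. -/
/-- If a VBM admits events `A`, `B` with `Aᶜ ∩ B ≠ ∅`,
`Pup (Aᶜ∩B) = 0`, `Plow B = 0` and `Pup B > 0`, then `c = 0`, `P0 B > 0`, `a < 0`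
and `b > 1`; i.e. the model is a Pari-Mutuel Model. -/
theorem stmt16 {Ω : Type*} (P0 : Set Ω → ℝ)
    (hP0u : P0 Set.univ = 1) (hP0e : P0 ∅ = 0) (hP0nn : ∀ E, 0 ≤ P0 E)
    (hP0add : ∀ E F : Set Ω, Disjoint E F → P0 (E ∪ F) = P0 E + P0 F)
    (a b c : ℝ) (hb : 0 < b) (ha : a ≤ 0) (hab0 : 0 ≤ a + b) (hab1 : a + b ≤ 1)
    (hc : c = 1 - (a + b))
    (Plow Pup : Set Ω → ℝ)
    (hPlow : ∀ E : Set Ω, E ≠ Set.univ → Plow E = max (b * P0 E + a) 0)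
    (hPlowU : Plow Set.univ = 1)
    (hPup : ∀ E : Set Ω, E ≠ ∅ → Pup E = min (b * P0 E + c) 1)
    (hPupE : Pup ∅ = 0)
    (A B : Set Ω) (hne : Aᶜ ∩ B ≠ ∅)
    (h1 : Pup (Aᶜ ∩ B) = 0) (h2 : Plow B = 0) (h3 : 0 < Pup B) :
    c = 0 ∧ 0 < P0 B ∧ a < 0 ∧ 1 < b := by
  have hcnn : 0 ≤ c := by rw [hc]; linarith
  -- from h1: min (b * P0 (Aᶜ∩B) + c) 1 = 0
  have e1 : min (b * P0 (Aᶜ ∩ B) + c) 1 = 0 := by rw [← hPup _ hne]; exact h1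
  have hx : 0 ≤ b * P0 (Aᶜ ∩ B) := mul_nonneg hb.le (hP0nn _)
  have hc0 : c = 0 := by
    rcases min_eq_iff.mp e1 with ⟨h, _⟩ | ⟨h, _⟩ <;> linarith
  -- B ≠ univ
  have hBu : B ≠ Set.univ := by
    intro h; rw [h, hPlowU] at h2; norm_num at h2
  have hBne : B ≠ ∅ := by
    intro h
    exact hne (by rw [h, Set.inter_empty])
  have e2 : max (b * P0 B + a) 0 = 0 := by rw [← hPlow _ hBu]; exact h2
  have hle : b * P0 B + a ≤ 0 := by
    rcases max_eq_iff.mp e2 with ⟨h, _⟩ | ⟨_, h⟩ <;> linarith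
  have e3 : min (b * P0 B + c) 1 = Pup B := (hPup _ hBne).symm
  have hPB : 0 < P0 B := by
    rcases (hP0nn B).lt_or_eq with h | h
    · exact h
    · exfalso
      rw [← h, mul_zero, hc0] at e3
      simp at e3
      rw [← e3] at h3; norm_num at h3
  have ha' : a < 0 := by nlinarith
  refine ⟨hc0, hPB, ha', ?_⟩
  have : a + b = 1 := by linarith [hc ▸ hc0]
  linarith
end

section
/- Let P̲ be the lower envelope of a nonempty convex set M of finitely additive probabilities on the powerset of Ω, and let B be an event with sup_{P∈M} P(B) > 0. Then for every event A, inf{P(A) : P ∈ M, P(B) > 0} = inf{P(A) : P ∈ M} = P̲(A). -/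
/-! Every `P ∈ M` is the limit of the mixtures `(1 - t) P + t Q` as `t → 0⁺`, where `Q ∈ M` has
`Q B > 0`; these mixtures lie in `M` and give `B` positive mass. So `M⁺` is dense in `M` for the
topology of pointwise convergence, and evaluation at `A`, being continuous, has the same infimum
on both. -/

open Set

theorem Real.sInf_eq_of_subset_of_subset_closure {s t : Set ℝ} (hst : s ⊆ t)
    (hts : t ⊆ closure s) : sInf s = sInf t := by
  rcases s.eq_empty_or_nonempty with rfl | hs
  · rw [closure_empty, subset_empty_iff] at hts
    rw [hts]
  have hlb : lowerBounds s = lowerBounds t :=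
    (lowerBounds_closure (s := s) ▸ lowerBounds_mono_set hts).antisymm (lowerBounds_mono_set hst)
  by_cases hb : BddBelow s
  · exact (((isGLB_iff_of_subset_of_subset_closure hst hts).1
      (isGLB_csInf hs hb)).csInf_eq (hs.mono hst)).symm
  · have hbt : ¬BddBelow t := by rwa [BddBelow, ← hlb]
    rw [Real.sInf_of_not_bddBelow hb, Real.sInf_of_not_bddBelow hbt]

theorem Continuous.sInf_image_eq_of_subset_closure {X : Type*} [TopologicalSpace X] {f : X → ℝ}
    (hf : Continuous f) {S T : Set X} (hST : S ⊆ T) (hTS : T ⊆ closure S) :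
    sInf (f '' S) = sInf (f '' T) :=
  Real.sInf_eq_of_subset_of_subset_closure (image_mono hST)
    ((image_mono hTS).trans (image_closure_subset_closure_image hf))

theorem Convex.subset_closure_sep_pos {E : Type*} [AddCommGroup E] [Module ℝ E]
    [TopologicalSpace E] [IsTopologicalAddGroup E] [ContinuousSMul ℝ E] {M : Set E}
    (hM : Convex ℝ M) (ψ : E →ₗ[ℝ] ℝ) (hψ : ∀ P ∈ M, 0 ≤ ψ P) {Q : E} (hQM : Q ∈ M)
    (hQ : 0 < ψ Q) : M ⊆ closure {P ∈ M | 0 < ψ P} := by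
  intro P hP
  refine closure_mono ?_ (segment_subset_closure_openSegment (left_mem_segment ℝ P Q))
  rintro _ ⟨a, b, ha, hb, hab, rfl⟩
  refine ⟨hM hP hQM ha.le hb.le hab, ?_⟩
  rw [map_add, map_smul, map_smul, smul_eq_mul, smul_eq_mul]
  exact add_pos_of_nonneg_of_pos (mul_nonneg ha.le (hψ P hP)) (mul_pos hb hQ)

theorem stmt18_general {Ω : Type*} (M : Set (Set Ω → ℝ))
    (hprob : ∀ P ∈ M, P Set.univ = 1 ∧ P ∅ = 0 ∧ (∀ E, 0 ≤ P E) ∧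
      (∀ E F : Set Ω, Disjoint E F → P (E ∪ F) = P E + P F))
    (hconv : ∀ P ∈ M, ∀ Q ∈ M, ∀ t : ℝ, 0 ≤ t → t ≤ 1 →
      (fun E => t * P E + (1 - t) * Q E) ∈ M)
    (Plow : Set Ω → ℝ) (hPlow : ∀ E, Plow E = sInf ((fun P => P E) '' M))
    (B : Set Ω) (hB : 0 < sSup ((fun P => P B) '' M)) :
    ∀ A : Set Ω,
      sInf ((fun P => P A) '' {P ∈ M | 0 < P B}) = sInf ((fun P => P A) '' M) ∧
      sInf ((fun P => P A) '' {P ∈ M | 0 < P B}) = Plow A := by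
  intro A
  obtain ⟨Q, hQM, hQB⟩ : ∃ Q ∈ M, 0 < Q B := by
    by_contra! h
    exact hB.not_ge (Real.sSup_nonpos (by rintro _ ⟨P, hP, rfl⟩; exact h P hP))
  have hconvex : Convex ℝ M := by
    intro P hP R hR a b ha hb hab
    obtain rfl : b = 1 - a := by linarith
    exact hconv P hP R hR a ha (by linarith)
  have hdense : M ⊆ closure {P ∈ M | 0 < P B} :=
    hconvex.subset_closure_sep_pos (LinearMap.proj B) (fun P hP => (hprob P hP).2.2.1 B) hQM hQB
  have heq : sInf ((fun P => P A) '' {P ∈ M | 0 < P B}) = sInf ((fun P => P A) '' M) :=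
    (continuous_apply A).sInf_image_eq_of_subset_closure (sep_subset _ _) hdense
  exact ⟨heq, heq.trans (hPlow A).symm⟩

/-- Let `Plow` be the lower envelope of a nonempty convex set `M` of
finitely additive probabilities, and `B` an event with `sup_{P∈M} P B > 0`. Then for
every event `A`, `inf {P A : P ∈ M, P B > 0} = inf {P A : P ∈ M} = Plow A`. -/
theorem stmt18 {Ω : Type*} (M : Set (Set Ω → ℝ)) (hM : M.Nonempty)
    (hprob : ∀ P ∈ M, P Set.univ = 1 ∧ P ∅ = 0 ∧ (∀ E, 0 ≤ P E) ∧
      (∀ E F : Set Ω, Disjoint E F → P (E ∪ F) = P E + P F))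
    (hconv : ∀ P ∈ M, ∀ Q ∈ M, ∀ t : ℝ, 0 ≤ t → t ≤ 1 →
      (fun E => t * P E + (1 - t) * Q E) ∈ M)
    (Plow : Set Ω → ℝ) (hPlow : ∀ E, Plow E = sInf ((fun P => P E) '' M))
    (B : Set Ω) (hB : 0 < sSup ((fun P => P B) '' M)) :
    ∀ A : Set Ω,
      sInf ((fun P => P A) '' {P ∈ M | 0 < P B}) = sInf ((fun P => P A) '' M) ∧
      sInf ((fun P => P A) '' {P ∈ M | 0 < P B}) = Plow A :=
  stmt18_general M hprob hconv Plow hPlow B hB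
end
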